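/- arXiv:2004.14160 — 2 statements merged into one kernel-verified Lean document; each statement's English description precedes it below -/
import Mathlib

section
/- For all natural n ≥ 1 and all real m, x with m ≠ 0: m^n * w_n(x/m) * (m+x) = x * ∑_{k=0}^{n} (-1)^{n+k} * k! * m^{n-k} * S(n,k) * (m+x)^{k}. -/
open Finset

def stirling2 : ℕ → ℕ → ℕ
  | 0, 0 => 1
  | 0, _ + 1 => 0
  | _ + 1, 0 => 0
  | n + 1, k + 1 => (k + 1) * stirling2 n (k + 1) + stirling2 n k

noncomputable def w (n : ℕ) (x : ℝ) : ℝ :=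
  ∑ k ∈ range (n + 1), (k.factorial : ℝ) * (stirling2 n k : ℝ) * x ^ k

lemma stirling2_eq_zero : ∀ n k : ℕ, n < k → stirling2 n k = 0
  | 0, k + 1, _ => rfl
  | n + 1, k + 1, h => by
    have h1 : n < k + 1 := by omega
    have h2 : n < k := by omega
    simp [stirling2, stirling2_eq_zero n (k + 1) h1, stirling2_eq_zero n k h2]

noncomputable def D (n : ℕ) (x : ℝ) : ℝ :=
  ∑ k ∈ range (n + 1), (k.factorial : ℝ) * (stirling2 n k : ℝ) * ((k : ℝ) * x ^ (k - 1))

lemma w_hasDerivAt (n : ℕ) (y : ℝ) : HasDerivAt (w n) (D n y) y := by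
  unfold w D
  apply HasDerivAt.fun_sum
  intro k _
  simpa [mul_assoc] using
    ((hasDerivAt_pow k y).const_mul ((k.factorial : ℝ) * (stirling2 n k : ℝ)))

lemma yD_eq (n : ℕ) (y : ℝ) :
    y * D n y = ∑ k ∈ range (n + 1),
      (k.factorial : ℝ) * (stirling2 n k : ℝ) * ((k : ℝ) * y ^ k) := by
  rw [D, Finset.mul_sum]
  refine Finset.sum_congr rfl fun k _ => ?_
  rcases k with _ | k
  · simp
  · simp only [Nat.add_sub_cancel, pow_succ]
    push_cast
    ring

lemma shift_sum (n : ℕ) (y : ℝ) :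
    (∑ k ∈ range (n + 1),
      ((k + 1).factorial : ℝ) * (stirling2 n (k + 1) : ℝ) * (((k : ℝ) + 1) * y ^ (k + 1)))
    = ∑ k ∈ range (n + 1),
      (k.factorial : ℝ) * (stirling2 n k : ℝ) * ((k : ℝ) * y ^ k) := by
  set E : ℕ → ℝ := fun j => (j.factorial : ℝ) * (stirling2 n j : ℝ) * ((j : ℝ) * y ^ j) with hE
  have h1 : ∑ j ∈ range (n + 2), E j = (∑ k ∈ range (n + 1), E (k + 1)) + E 0 :=
    Finset.sum_range_succ' E (n + 1)
  have h2 : ∑ j ∈ range (n + 2), E j = (∑ j ∈ range (n + 1), E j) + E (n + 1) :=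
    Finset.sum_range_succ E (n + 1)
  have h0 : E 0 = 0 := by simp [hE]
  have htop : E (n + 1) = 0 := by simp [hE, stirling2_eq_zero n (n + 1) (by omega)]
  have : (∑ k ∈ range (n + 1), E (k + 1)) = ∑ j ∈ range (n + 1), E j := by
    rw [← add_zero (∑ k ∈ range (n + 1), E (k + 1)), ← h0, ← h1, h2, htop, add_zero]
  calc (∑ k ∈ range (n + 1),
      ((k + 1).factorial : ℝ) * (stirling2 n (k + 1) : ℝ) * (((k : ℝ) + 1) * y ^ (k + 1)))
      = ∑ k ∈ range (n + 1), E (k + 1) := by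
        refine Finset.sum_congr rfl fun k _ => ?_
        simp [hE]
    _ = ∑ j ∈ range (n + 1), E j := this

lemma w_succ (n : ℕ) (y : ℝ) :
    w (n + 1) y = y * w n y + (1 + y) * (y * D n y) := by
  have step1 : w (n + 1) y = ∑ k ∈ range (n + 1),
      (((k + 1).factorial : ℝ) * (stirling2 n (k + 1) : ℝ) * (((k : ℝ) + 1) * y ^ (k + 1))
        + (((k : ℝ) + 1) * (k.factorial : ℝ) * (stirling2 n k : ℝ) * y ^ (k + 1))) := by
    rw [w, Finset.sum_range_succ']
    have h0 : ((0 : ℕ).factorial : ℝ) * (stirling2 (n + 1) 0 : ℝ) * y ^ 0 = 0 := by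
      simp [stirling2]
    rw [h0, add_zero]
    refine Finset.sum_congr rfl fun k _ => ?_
    have hrec : stirling2 (n + 1) (k + 1) = (k + 1) * stirling2 n (k + 1) + stirling2 n k := rfl
    have hfac : ((k + 1).factorial : ℝ) = ((k : ℝ) + 1) * (k.factorial : ℝ) := by
      push_cast [Nat.factorial_succ]; ring
    rw [hrec, hfac]
    push_cast
    ring
  rw [step1, Finset.sum_add_distrib, shift_sum, ← yD_eq]
  have step2 : (∑ k ∈ range (n + 1),
      (((k : ℝ) + 1) * (k.factorial : ℝ) * (stirling2 n k : ℝ) * y ^ (k + 1)))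
      = y * w n y + y * (y * D n y) := by
    rw [w, Finset.mul_sum, yD_eq, Finset.mul_sum, ← Finset.sum_add_distrib]
    refine Finset.sum_congr rfl fun k _ => ?_
    rw [pow_succ]
    ring
  rw [step2]
  ring

lemma key (n : ℕ) (hn : 1 ≤ n) :
    ∀ y : ℝ, (1 + y) * w n y = (-1) ^ n * y * w n (-1 - y) := by
  induction n, hn using Nat.le_induction with
  | base =>
    intro y
    simp [w, Finset.sum_range_succ, stirling2]
    ring
  | succ n hn ih =>
    intro y
    have hfun : (fun y : ℝ => (1 + y) * w n y)
        = fun y : ℝ => (-1) ^ n * y * w n (-1 - y) := funext ih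
    have h1 : HasDerivAt (fun y : ℝ => (1 + y) * w n y)
        (1 * w n y + (1 + y) * D n y) y := by
      exact (((hasDerivAt_id y).const_add 1)).mul (w_hasDerivAt n y)
    have hinner : HasDerivAt (fun y : ℝ => w n (-1 - y)) (D n (-1 - y) * (-1)) y := by
      have hl : HasDerivAt (fun y : ℝ => -1 - y) (-1 : ℝ) y := by
        exact (hasDerivAt_id' y).const_sub (-1)
      exact (w_hasDerivAt n (-1 - y)).comp y hl
    have h2 : HasDerivAt (fun y : ℝ => (-1) ^ n * y * w n (-1 - y))
        ((-1 : ℝ) ^ n * 1 * w n (-1 - y) + (-1) ^ n * y * (D n (-1 - y) * (-1))) y := by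
      have hml : HasDerivAt (fun y : ℝ => (-1 : ℝ) ^ n * y) ((-1 : ℝ) ^ n * 1) y :=
        (hasDerivAt_id y).const_mul _
      exact hml.mul hinner
    have h1' : HasDerivAt (fun y : ℝ => (-1) ^ n * y * w n (-1 - y))
        (1 * w n y + (1 + y) * D n y) y := hfun ▸ h1
    have hderiv : 1 * w n y + (1 + y) * D n y
        = (-1 : ℝ) ^ n * 1 * w n (-1 - y) + (-1) ^ n * y * (D n (-1 - y) * (-1)) :=
      h1'.unique h2
    rw [w_succ, w_succ]
    have hy : (1 : ℝ) + (-1 - y) = -y := by ring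
    rw [hy]
    linear_combination (y * (1 + y)) * hderiv

theorem stmt14 (n : ℕ) (hn : 1 ≤ n) (m x : ℝ) (hm : m ≠ 0) :
    (m + x) * m ^ n * w n (x / m)
      = x * ∑ k ∈ range (n + 1),
          (-1) ^ (n + k) * (k.factorial : ℝ) * m ^ (n - k) * (stirling2 n k : ℝ) * (m + x) ^ k := by
  have hk := key n hn (x / m)
  have hLHS : (m + x) * m ^ n * w n (x / m)
      = m ^ n * m * ((1 + x / m) * w n (x / m)) := by
    field_simp
  rw [hLHS, hk]
  have hRHS : m ^ n * (w n (-1 - x / m))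
      = ∑ k ∈ range (n + 1),
        (-1) ^ k * (k.factorial : ℝ) * m ^ (n - k) * (stirling2 n k : ℝ) * (m + x) ^ k := by
    rw [w, Finset.mul_sum]
    refine Finset.sum_congr rfl fun k hkmem => ?_
    have hkn : k ≤ n := by
      have := Finset.mem_range.mp hkmem; omega
    have hpow : (m : ℝ) ^ n = m ^ (n - k) * m ^ k := by
      rw [← pow_add]
      congr 1
      omega
    have hbase : (-1 - x / m) = (-(m + x)) / m := by
      field_simp
      ring
    rw [hbase, div_pow, hpow, neg_pow (m + x) k]
    field_simp
  have hw : m ^ n * m * ((-1) ^ n * (x / m) * w n (-1 - x / m))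
      = x * ((-1 : ℝ) ^ n * (m ^ n * w n (-1 - x / m))) := by
    field_simp
  rw [hw, hRHS, Finset.mul_sum]
  congr 1
  refine Finset.sum_congr rfl fun k _ => ?_
  rw [pow_add]
  ring
end

section
/- For every natural number n, the ordered Bell number w_n = ∑_{k=0}^{n} k! * S(n,k) equals the sum of the convergent series ∑_{k=0}^{∞} k^n / 2^{k+1}. -/
open Finset

def ob (n : ℕ) : ℕ := ∑ k ∈ range (n + 1), k.factorial * stirling2 n k

/-! Expanding `x ^ n = ∑ S(n,k) x↓k` in falling factorials reduces the series to the
negative binomial series `∑ₓ x↓k / 2 ^ (x + 1) = k!`, whence `∑ₓ x ^ n / 2 ^ (x + 1) = ∑ k! S(n,k)`. -/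

theorem stirling2_eq_stirlingSecond : stirling2 = Nat.stirlingSecond := by
  funext n k
  induction n generalizing k with
  | zero => cases k <;> rfl
  | succ n ih =>
    cases k with
    | zero => rfl
    | succ k => rw [stirling2, Nat.stirlingSecond_succ_succ, ih, ih]

namespace Nat

theorem mul_descFactorial_eq_descFactorial_succ_add (x k : ℕ) :
    x * x.descFactorial k = x.descFactorial (k + 1) + k * x.descFactorial k := by
  rcases le_or_gt k x with h | h
  · rw [descFactorial_succ, ← Nat.add_mul, Nat.sub_add_cancel h]
  · simp [descFactorial_eq_zero_iff_lt.mpr h]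

theorem pow_eq_sum_stirlingSecond_mul_descFactorial (n x : ℕ) :
    x ^ n = ∑ k ∈ range (n + 1), stirlingSecond n k * x.descFactorial k := by
  induction n with
  | zero => simp
  | succ n ih =>
    have hlast : stirlingSecond n (n + 1) = 0 := stirlingSecond_eq_zero_of_lt n.lt_succ_self
    have hshift : ∑ k ∈ range (n + 1), stirlingSecond n k * (k * x.descFactorial k) =
        ∑ k ∈ range (n + 1), (k + 1) * stirlingSecond n (k + 1) * x.descFactorial (k + 1) := by
      rw [sum_range_succ', sum_range_succ (fun k => (k + 1) * _ * _), hlast]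
      simp only [zero_mul, mul_zero, add_zero]
      exact sum_congr rfl fun k _ => by ring
    calc x ^ (n + 1)
        = ∑ k ∈ range (n + 1), stirlingSecond n k * x.descFactorial (k + 1)
          + ∑ k ∈ range (n + 1), stirlingSecond n k * (k * x.descFactorial k) := by
          rw [pow_succ', ih, mul_sum, ← sum_add_distrib]
          refine sum_congr rfl fun k _ => ?_
          rw [mul_left_comm, mul_descFactorial_eq_descFactorial_succ_add, mul_add]
      _ = ∑ k ∈ range (n + 2), stirlingSecond (n + 1) k * x.descFactorial k := by
          rw [hshift, sum_range_succ' (fun k => stirlingSecond (n + 1) k * _), ← sum_add_distrib]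
          simp only [stirlingSecond_succ_succ, stirlingSecond_succ_zero, zero_mul, add_zero]
          exact sum_congr rfl fun k _ => by ring

end Nat

open Nat

theorem hasSum_choose_mul_pow_of_norm_lt_one {𝕜 : Type*} [NormedField 𝕜] [HasSummableGeomSeries 𝕜]
    (j : ℕ) {r : 𝕜} (hr : ‖r‖ < 1) :
    HasSum (fun k : ℕ => (k.choose j : 𝕜) * r ^ k) (r ^ j / (1 - r) ^ (j + 1)) := by
  have hinit : ∑ k ∈ range j, (k.choose j : 𝕜) * r ^ k = 0 :=
    sum_eq_zero fun k hk => by simp [choose_eq_zero_of_lt (mem_range.mp hk)]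
  rw [div_eq_mul_one_div, ← add_zero (_ * _), ← hinit, ← hasSum_nat_add_iff]
  exact ((hasSum_choose_mul_geometric_of_norm_lt_one j hr).mul_left (r ^ j)).congr_fun
    fun k => by ring

theorem hasSum_descFactorial_div_two_pow (j : ℕ) :
    HasSum (fun k : ℕ => (k.descFactorial j : ℝ) / 2 ^ (k + 1)) j ! := by
  have h := (hasSum_choose_mul_pow_of_norm_lt_one j (r := (2⁻¹ : ℝ)) (by norm_num)).mul_left
    ((j ! : ℝ) / 2)
  have hvalue : (j ! : ℝ) / 2 * ((2⁻¹) ^ j / (1 - 2⁻¹) ^ (j + 1)) = j ! := by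
    field_simp
    ring
  rw [hvalue] at h
  exact h.congr_fun fun k => by
    rw [descFactorial_eq_factorial_mul_choose, inv_pow]
    push_cast
    field_simp
    ring

theorem hasSum_pow_div_two_pow (n : ℕ) :
    HasSum (fun k : ℕ => (k : ℝ) ^ n / 2 ^ (k + 1))
      (∑ j ∈ range (n + 1), (stirlingSecond n j * j ! : ℝ)) :=
  (hasSum_sum fun j _ => (hasSum_descFactorial_div_two_pow j).mul_left
    (stirlingSecond n j : ℝ)).congr_fun fun k => by
      simp only [← mul_div_assoc]
      rw [← sum_div]
      congr 1
      exact_mod_cast pow_eq_sum_stirlingSecond_mul_descFactorial n k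

theorem stmt18 (n : ℕ) :
    Summable (fun k : ℕ => (k : ℝ) ^ n / 2 ^ (k + 1)) ∧
      (ob n : ℝ) = ∑' k : ℕ, (k : ℝ) ^ n / 2 ^ (k + 1) := by
  have h := hasSum_pow_div_two_pow n
  refine ⟨h.summable, ?_⟩
  rw [h.tsum_eq, ob, stirling2_eq_stirlingSecond]
  push_cast
  exact sum_congr rfl fun j _ => mul_comm _ _
end
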